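/- (Sectional robustness.) Let A be an m×n real matrix, K ⊆ {1,…,n}, and C > 1. Suppose that for every x' ∈ ℝⁿ and every w ∈ ℝⁿ with Aw = 0 one has ‖x'_K + w_K‖₁ + (1/C)·‖w_K̄‖₁ ≥ ‖x'_K‖₁. Then for every x ∈ ℝⁿ, every ℓ1 minimizer x̂ for (A, x) satisfies ‖x − x̂‖₁ ≤ (2(C+1)/(C−1))·‖x_K̄‖₁. -/

import Mathlib

/-- The ℓ1 norm of a vector in ℝⁿ. -/
noncomputable def l1 {n : ℕ} (x : Fin n → ℝ) : ℝ := ∑ i, |x i|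

/-- The restriction of a vector to the coordinates in `K` (zero outside `K`). -/
def restr {n : ℕ} (K : Finset (Fin n)) (x : Fin n → ℝ) : Fin n → ℝ :=
  fun i => if i ∈ K then x i else 0

/-!
Write `x̂ = x + w` with `w` in the null space. Robustness at `x' = -w` gives
`‖w_K‖₁ ≤ ‖w_K̄‖₁ / C`, and at `x' = x`, together with `‖x + w‖₁ ≤ ‖x‖₁` and the triangle
inequality on `K̄`, it gives `(1 - 1/C) ‖w_K̄‖₁ ≤ 2 ‖x_K̄‖₁`. Hence
`(C - 1) ‖w‖₁ ≤ (C - 1)(1 + 1/C) ‖w_K̄‖₁ = (C + 1)(1 - 1/C) ‖w_K̄‖₁ ≤ 2 (C + 1) ‖x_K̄‖₁`.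
-/

section L1

variable {n : ℕ}

@[simp]
lemma l1_zero : l1 (0 : Fin n → ℝ) = 0 := by
  simp [l1]

@[simp]
lemma l1_neg (x : Fin n → ℝ) : l1 (-x) = l1 x := by
  simp [l1]

lemma l1_sub_comm (x y : Fin n → ℝ) : l1 (x - y) = l1 (y - x) := by
  rw [← neg_sub, l1_neg]

lemma l1_sub_le_l1_add (x y : Fin n → ℝ) : l1 y - l1 x ≤ l1 (x + y) := by
  rw [l1, l1, l1, ← Finset.sum_sub_distrib]
  refine Finset.sum_le_sum fun i _ => ?_
  have := abs_sub (x i + y i) (x i)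
  simp only [add_sub_cancel_left] at this
  simp only [Pi.add_apply]
  linarith

@[simp]
lemma restr_add (K : Finset (Fin n)) (x y : Fin n → ℝ) :
    restr K (x + y) = restr K x + restr K y := by
  ext i
  by_cases h : i ∈ K <;> simp [restr, h]

@[simp]
lemma restr_neg (K : Finset (Fin n)) (x : Fin n → ℝ) : restr K (-x) = -restr K x := by
  ext i
  by_cases h : i ∈ K <;> simp [restr, h]

lemma l1_restr_add_l1_restr_compl (K : Finset (Fin n)) (x : Fin n → ℝ) :
    l1 (restr K x) + l1 (restr Kᶜ x) = l1 x := by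
  rw [l1, l1, l1, ← Finset.sum_add_distrib]
  refine Finset.sum_congr rfl fun i _ => ?_
  by_cases h : i ∈ K <;> simp [restr, h]

end L1

def HasRobustNullSpaceProperty {m n : ℕ} (A : Matrix (Fin m) (Fin n) ℝ) (K : Finset (Fin n))
    (C : ℝ) : Prop :=
  ∀ x' w : Fin n → ℝ, A.mulVec w = 0 →
    l1 (restr K x') ≤ l1 (restr K x' + restr K w) + 1 / C * l1 (restr Kᶜ w)

namespace HasRobustNullSpaceProperty

variable {m n : ℕ} {A : Matrix (Fin m) (Fin n) ℝ} {K : Finset (Fin n)} {C : ℝ}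

lemma l1_restr_le (hA : HasRobustNullSpaceProperty A K C) {w : Fin n → ℝ}
    (hw : A.mulVec w = 0) :
    l1 (restr K w) ≤ 1 / C * l1 (restr Kᶜ w) := by
  simpa using hA (-w) w hw

lemma l1_restr_compl_le (hA : HasRobustNullSpaceProperty A K C) {x w : Fin n → ℝ}
    (hw : A.mulVec w = 0) (hmin : l1 (x + w) ≤ l1 x) :
    (1 - 1 / C) * l1 (restr Kᶜ w) ≤ 2 * l1 (restr Kᶜ x) := by
  have hK := hA x w hw
  have hKc := l1_sub_le_l1_add (restr Kᶜ x) (restr Kᶜ w)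
  rw [← l1_restr_add_l1_restr_compl K x, ← l1_restr_add_l1_restr_compl K (x + w),
    restr_add, restr_add] at hmin
  linarith

lemma l1_le (hA : HasRobustNullSpaceProperty A K C) (hC : 1 < C) {x w : Fin n → ℝ}
    (hw : A.mulVec w = 0) (hmin : l1 (x + w) ≤ l1 x) :
    l1 w ≤ 2 * (C + 1) / (C - 1) * l1 (restr Kᶜ x) := by
  rw [div_mul_eq_mul_div, le_div_iff₀ (by linarith), ← l1_restr_add_l1_restr_compl K w]
  set b := l1 (restr Kᶜ w)
  have hC0 : C ≠ 0 := by positivity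
  calc (l1 (restr K w) + b) * (C - 1)
      ≤ (1 / C * b + b) * (C - 1) := by
        gcongr
        exact hA.l1_restr_le hw
    _ = (C + 1) * ((1 - 1 / C) * b) := by field_simp; ring
    _ ≤ (C + 1) * (2 * l1 (restr Kᶜ x)) :=
        mul_le_mul_of_nonneg_left (hA.l1_restr_compl_le hw hmin) (by linarith)
    _ = 2 * (C + 1) * l1 (restr Kᶜ x) := by ring

end HasRobustNullSpaceProperty

theorem stmt_5 {m n : ℕ} (A : Matrix (Fin m) (Fin n) ℝ)
    (K : Finset (Fin n)) (C : ℝ) (hC : 1 < C)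
    (hcond : ∀ x' : Fin n → ℝ, ∀ w : Fin n → ℝ, A.mulVec w = 0 →
      l1 (restr K x' + restr K w) + (1 / C) * l1 (restr Kᶜ w) ≥ l1 (restr K x')) :
    ∀ x : Fin n → ℝ, ∀ xh : Fin n → ℝ, A.mulVec xh = A.mulVec x →
      (∀ z : Fin n → ℝ, A.mulVec z = A.mulVec x → l1 xh ≤ l1 z) →
      l1 (x - xh) ≤ (2 * (C + 1) / (C - 1)) * l1 (restr Kᶜ x) := by
  intro x xh hAx hmin
  have hw : A.mulVec (xh - x) = 0 := by rw [Matrix.mulVec_sub, hAx, sub_self]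
  have hx : l1 (x + (xh - x)) ≤ l1 x := by simpa using hmin x rfl
  rw [l1_sub_comm]
  exact HasRobustNullSpaceProperty.l1_le hcond hC hw hx
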